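/- If the pair (A,P) has (h,k)-growth with (P_n) strongly invariant for the system (A), then the sequence of norms defined by ‖x‖_n = sup_{m ≥ n} (h_n/h_m)‖A_m^n P_n x‖ + sup_{p ≤ n} (k_p/k_n)‖B_n^p Q_n x‖, for all n ∈ ℕ and x ∈ X, is a well-defined sequence of norms compatible with (P_n). -/

import Mathlib

open ContinuousLinearMap Filter

noncomputable section

variable {X : Type*} [NormedAddCommGroup X] [NormedSpace ℝ X]

/-- The evolution operator `A_m^n` associated to the linear difference system
`x_{n+1} = A_n x_n`: `A_m^n = A_{m-1} ⋯ A_n` for `m > n` and `A_n^n = I`. -/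
def evol (A : ℕ → X →L[ℝ] X) : ℕ → ℕ → X →L[ℝ] X
  | 0, _ => 1
  | m + 1, n => if m + 1 ≤ n then 1 else A m ∘L evol A m n

/-- `P` is a projectors sequence. -/
def ProjSeq (P : ℕ → X →L[ℝ] X) : Prop := ∀ n, P n ∘L P n = P n

/-- The projectors sequence `P` is invariant for the system `(A)`. -/
def InvariantFor (A P : ℕ → X →L[ℝ] X) : Prop := ∀ n, A n ∘L P n = P (n + 1) ∘L A n

/-- The projectors sequence `P` is strongly invariant for the system `(A)`: it is invariant and
the restriction of `A_m^n` to `Ker P_n` is an isomorphism from `Ker P_n` onto `Ker P_m`. -/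
def StronglyInvariantFor (A P : ℕ → X →L[ℝ] X) : Prop :=
  InvariantFor A P ∧ ∀ m n : ℕ, n ≤ m →
    Set.BijOn (evol A m n) (LinearMap.ker (P n : X →ₗ[ℝ] X) : Set X) (LinearMap.ker (P m : X →ₗ[ℝ] X) : Set X)

/-- A growth rate: an increasing sequence with values in `[1, ∞)` tending to `∞`. -/
def IsGrowthRate (h : ℕ → ℝ) : Prop :=
  StrictMono h ∧ (∀ n, 1 ≤ h n) ∧ Tendsto h atTop atTop

/-- The pair `(A, P)` is `(h,k)`-dichotomic. -/
def Dichotomic (A P : ℕ → X →L[ℝ] X) (h k : ℕ → ℝ) : Prop :=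
  ∃ d : ℕ → ℝ, (∀ n, 1 ≤ d n) ∧ Monotone d ∧
    ∀ m n : ℕ, n ≤ m → ∀ x : X,
      h m * ‖evol A m n (P n x)‖ ≤ d n * (h n * ‖P n x‖) ∧
      k m * ‖(1 - P n) x‖ ≤ d m * (k n * ‖evol A m n ((1 - P n) x)‖)

/-- The pair `(A, P)` is uniformly `(h,k)`-dichotomic. -/
def UniformDichotomic (A P : ℕ → X →L[ℝ] X) (h k : ℕ → ℝ) : Prop :=
  ∃ d : ℝ, 1 ≤ d ∧
    ∀ m n : ℕ, n ≤ m → ∀ x : X,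
      h m * ‖evol A m n (P n x)‖ ≤ d * (h n * ‖P n x‖) ∧
      k m * ‖(1 - P n) x‖ ≤ d * (k n * ‖evol A m n ((1 - P n) x)‖)

/-- The pair `(A, P)` has `(h,k)`-growth. -/
def HasGrowth (A P : ℕ → X →L[ℝ] X) (h k : ℕ → ℝ) : Prop :=
  ∃ g : ℕ → ℝ, (∀ n, 1 ≤ g n) ∧ Monotone g ∧
    ∀ m n : ℕ, n ≤ m → ∀ x : X,
      h n * ‖evol A m n (P n x)‖ ≤ g n * (h m * ‖P n x‖) ∧
      k n * ‖(1 - P n) x‖ ≤ g m * (k m * ‖evol A m n ((1 - P n) x)‖)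

/-- `N` is a sequence of norms on `X`. -/
def IsNormSeq (N : ℕ → X → ℝ) : Prop :=
  ∀ n, (∀ x y, N n (x + y) ≤ N n x + N n y) ∧
    (∀ (a : ℝ) (x : X), N n (a • x) = |a| * N n x) ∧
    (∀ x, N n x = 0 ↔ x = 0)

/-- The sequence of norms `N` is compatible with the projectors sequence `P`. -/
def NormsCompatible (N : ℕ → X → ℝ) (P : ℕ → X →L[ℝ] X) : Prop :=
  IsNormSeq N ∧ ∃ c : ℕ → ℝ, (∀ n, 1 ≤ c n) ∧ Monotone c ∧
    ∀ (n : ℕ) (x : X), ‖x‖ ≤ N n x ∧ N n x ≤ c n * (‖P n x‖ + ‖(1 - P n) x‖)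

/-- The defining properties of the skew-evolution operator `B` associated to the pair `(A, P)`:
`A_m^n B_m^n Q_m = Q_m`, `B_m^n A_m^n Q_n = Q_n` and `B_m^n Q_m = Q_n B_m^n Q_m` for `m ≥ n`,
where `Q_n = I - P_n`. -/
def SkewEvol (A P : ℕ → X →L[ℝ] X) (B : ℕ → ℕ → X →L[ℝ] X) : Prop :=
  ∀ m n : ℕ, n ≤ m →
    evol A m n ∘L (B m n ∘L (1 - P m)) = 1 - P m ∧
    B m n ∘L (evol A m n ∘L (1 - P n)) = 1 - P n ∧
    B m n ∘L (1 - P m) = (1 - P n) ∘L (B m n ∘L (1 - P m))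

/-! Each of the two suprema is a supremum of seminorms, hence a seminorm once it is pointwise
finite. Its term of index `n` is `‖P_n x‖` (resp. `‖Q_n x‖`), which gives the lower bound, and the
growth estimates bound every term by `g_n ‖P_n x‖` (resp. `g_n ‖Q_n x‖`), which gives both the
finiteness and the upper bound. For the backward terms the estimate is applied to
`B_n^p Q_n x ∈ Ker P_p`, which `A_n^p` maps back to `Q_n x`. -/

theorem evol_self (A : ℕ → X →L[ℝ] X) (n : ℕ) : evol A n n = 1 := by
  cases n with
  | zero => rfl
  | succ m => simp [evol]

section WeightedSup

variable {ι Y : Type*} [NormedAddCommGroup Y] [NormedSpace ℝ Y]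

def weightedSup (S : Set ι) (w : ι → ℝ) (T : ι → X →L[ℝ] Y) (x : X) : ℝ :=
  sSup ((fun i => w i * ‖T i x‖) '' S)

variable {S : Set ι} {w : ι → ℝ} {T : ι → X →L[ℝ] Y}

theorem le_weightedSup {x : X} (hbdd : BddAbove ((fun i => w i * ‖T i x‖) '' S)) {i : ι}
    (hi : i ∈ S) : w i * ‖T i x‖ ≤ weightedSup S w T x :=
  le_csSup hbdd ⟨i, hi, rfl⟩

theorem weightedSup_le {x : X} {C : ℝ} (hC : ∀ i ∈ S, w i * ‖T i x‖ ≤ C) (hC0 : 0 ≤ C) :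
    weightedSup S w T x ≤ C :=
  Real.sSup_le (Set.forall_mem_image.2 hC) hC0

theorem weightedSup_nonneg (hw : ∀ i ∈ S, 0 ≤ w i) (x : X) : 0 ≤ weightedSup S w T x :=
  Real.sSup_nonneg (Set.forall_mem_image.2 fun i hi => mul_nonneg (hw i hi) (norm_nonneg _))

theorem weightedSup_add_le (hw : ∀ i ∈ S, 0 ≤ w i)
    (hbdd : ∀ x, BddAbove ((fun i => w i * ‖T i x‖) '' S)) (x y : X) :
    weightedSup S w T (x + y) ≤ weightedSup S w T x + weightedSup S w T y := by
  refine weightedSup_le (fun i hi => ?_)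
    (add_nonneg (weightedSup_nonneg hw x) (weightedSup_nonneg hw y))
  calc w i * ‖T i (x + y)‖ ≤ w i * ‖T i x‖ + w i * ‖T i y‖ := by
        rw [map_add, ← mul_add]
        exact mul_le_mul_of_nonneg_left (norm_add_le _ _) (hw i hi)
    _ ≤ weightedSup S w T x + weightedSup S w T y :=
        add_le_add (le_weightedSup (hbdd x) hi) (le_weightedSup (hbdd y) hi)

open scoped Pointwise in
theorem weightedSup_smul (a : ℝ) (x : X) :
    weightedSup S w T (a • x) = |a| * weightedSup S w T x := by
  have hterms : (fun i => w i * ‖T i (a • x)‖) '' S = |a| • (fun i => w i * ‖T i x‖) '' S := by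
    rw [← Set.image_smul, Set.image_image]
    refine Set.image_congr fun i _ => ?_
    rw [map_smul, norm_smul, Real.norm_eq_abs, smul_eq_mul]
    ring
  rw [weightedSup, hterms, Real.sSup_smul_of_nonneg (abs_nonneg a), smul_eq_mul, weightedSup]

def weightedSupSeminorm (hw : ∀ i ∈ S, 0 ≤ w i)
    (hbdd : ∀ x, BddAbove ((fun i => w i * ‖T i x‖) '' S)) : Seminorm ℝ X :=
  Seminorm.of (weightedSup S w T) (weightedSup_add_le hw hbdd) fun a x => by
    rw [weightedSup_smul, Real.norm_eq_abs]

theorem weightedSup_bounds {x : X} {i₀ : ι} {y : Y} {C : ℝ} (hi₀ : i₀ ∈ S)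
    (hy : w i₀ * ‖T i₀ x‖ = ‖y‖) (hC : ∀ i ∈ S, w i * ‖T i x‖ ≤ C * ‖y‖) (hC0 : 0 ≤ C) :
    ‖y‖ ≤ weightedSup S w T x ∧ weightedSup S w T x ≤ C * ‖y‖ :=
  ⟨hy ▸ le_weightedSup ⟨_, Set.forall_mem_image.2 hC⟩ hi₀,
    weightedSup_le hC (mul_nonneg hC0 (norm_nonneg y))⟩

end WeightedSup

theorem isNormSeq_of_norm_le (p : ℕ → Seminorm ℝ X) (hp : ∀ n x, ‖x‖ ≤ p n x) :
    IsNormSeq fun n => ⇑(p n) := fun n =>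
  ⟨map_add_le_add (p n), fun a x => by
    simp only [map_smul_eq_mul, Real.norm_eq_abs],
    fun x => ⟨fun hx => norm_le_zero_iff.1 (hx ▸ hp n x), fun hx => hx ▸ map_zero (p n)⟩⟩

theorem normsCompatible_of_seminorms (P : ℕ → X →L[ℝ] X) (p q : ℕ → Seminorm ℝ X) (c : ℕ → ℝ)
    (hc1 : ∀ n, 1 ≤ c n) (hc : Monotone c)
    (hp : ∀ n x, ‖P n x‖ ≤ p n x ∧ p n x ≤ c n * ‖P n x‖)
    (hq : ∀ n x, ‖(1 - P n) x‖ ≤ q n x ∧ q n x ≤ c n * ‖(1 - P n) x‖) :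
    NormsCompatible (fun n x => p n x + q n x) P := by
  have hlow : ∀ n x, ‖x‖ ≤ p n x + q n x := fun n x => calc
    ‖x‖ = ‖P n x + (1 - P n) x‖ := by simp
    _ ≤ ‖P n x‖ + ‖(1 - P n) x‖ := norm_add_le _ _
    _ ≤ p n x + q n x := add_le_add (hp n x).1 (hq n x).1
  refine ⟨isNormSeq_of_norm_le (fun n => p n + q n) hlow, c, hc1, hc, fun n x => ⟨hlow n x, ?_⟩⟩
  rw [mul_add]
  exact add_le_add (hp n x).2 (hq n x).2

section Growth

variable {A P : ℕ → X →L[ℝ] X} {B : ℕ → ℕ → X →L[ℝ] X}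

theorem SkewEvol.apply_self (hB : SkewEvol A P B) (n : ℕ) (x : X) :
    B n n ((1 - P n) x) = (1 - P n) x := by
  simpa [evol_self] using DFunLike.congr_fun (hB n n le_rfl).1 x

theorem SkewEvol.evol_apply (hB : SkewEvol A P B) {m n : ℕ} (hnm : n ≤ m) (x : X) :
    evol A m n (B m n ((1 - P m) x)) = (1 - P m) x :=
  DFunLike.congr_fun (hB m n hnm).1 x

theorem SkewEvol.apply_mem_ker (hB : SkewEvol A P B) {m n : ℕ} (hnm : n ≤ m) (x : X) :
    (1 - P n) (B m n ((1 - P m) x)) = B m n ((1 - P m) x) :=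
  (DFunLike.congr_fun (hB m n hnm).2.2 x).symm

theorem div_mul_norm_evol_proj_le {h g : ℕ → ℝ} (hh : ∀ n, 0 < h n)
    (hg : ∀ m n, n ≤ m → ∀ x, h n * ‖evol A m n (P n x)‖ ≤ g n * (h m * ‖P n x‖))
    {m n : ℕ} (hnm : n ≤ m) (x : X) :
    h n / h m * ‖evol A m n (P n x)‖ ≤ g n * ‖P n x‖ := by
  rw [div_mul_eq_mul_div, div_le_iff₀ (hh m)]
  linarith [hg m n hnm x]

theorem SkewEvol.undiv_mul_norm_evol_proj_le (hB : SkewEvol A P B) {k g : ℕ → ℝ} (hk : ∀ n, 0 < k n)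
    (hg : ∀ m n, n ≤ m → ∀ x, k n * ‖(1 - P n) x‖ ≤ g m * (k m * ‖evol A m n ((1 - P n) x)‖))
    {m n : ℕ} (hnm : n ≤ m) (x : X) :
    k n / k m * ‖B m n ((1 - P m) x)‖ ≤ g m * ‖(1 - P m) x‖ := by
  have hgrowth := hg m n hnm (B m n ((1 - P m) x))
  rw [hB.apply_mem_ker hnm, hB.evol_apply hnm] at hgrowth
  rw [div_mul_eq_mul_div, div_le_iff₀ (hk m)]
  linarith

end Growth

theorem stmt_12_general (A P : ℕ → X →L[ℝ] X) (B : ℕ → ℕ → X →L[ℝ] X)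
    (hB : SkewEvol A P B)
    (h k : ℕ → ℝ) (hh : IsGrowthRate h) (hk : IsGrowthRate k)
    (hG : HasGrowth A P h k) :
    NormsCompatible (fun n x =>
      sSup ((fun m => (h n / h m) * ‖evol A m n (P n x)‖) '' Set.Ici n) +
      sSup ((fun p => (k p / k n) * ‖B n p ((1 - P n) x)‖) '' Set.Iic n)) P := by
  obtain ⟨g, hg1, hg, hgrowth⟩ := hG
  have hh0 : ∀ n, 0 < h n := fun n => one_pos.trans_le (hh.2.1 n)
  have hk0 : ∀ n, 0 < k n := fun n => one_pos.trans_le (hk.2.1 n)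
  have hg0 : ∀ n, 0 ≤ g n := fun n => zero_le_one.trans (hg1 n)
  have hstable : ∀ n x, ∀ m ∈ Set.Ici n,
      h n / h m * ‖(evol A m n ∘L P n) x‖ ≤ g n * ‖P n x‖ := fun _ x _ hm =>
    div_mul_norm_evol_proj_le hh0 (fun m n hnm x => (hgrowth m n hnm x).1) hm x
  have hunstable : ∀ n x, ∀ p ∈ Set.Iic n,
      k p / k n * ‖(B n p ∘L (1 - P n)) x‖ ≤ g n * ‖(1 - P n) x‖ := fun _ x _ hp =>
    hB.undiv_mul_norm_evol_proj_le hk0 (fun m n hnm x => (hgrowth m n hnm x).2) hp x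
  exact normsCompatible_of_seminorms P
    (fun n => weightedSupSeminorm (fun m _ => div_nonneg (hh0 n).le (hh0 m).le)
      fun x => ⟨_, Set.forall_mem_image.2 (hstable n x)⟩)
    (fun n => weightedSupSeminorm (fun p _ => div_nonneg (hk0 p).le (hk0 n).le)
      fun x => ⟨_, Set.forall_mem_image.2 (hunstable n x)⟩)
    g hg1 hg
    (fun n x => weightedSup_bounds Set.self_mem_Ici
      (by rw [div_self (hh0 n).ne', one_mul, comp_apply, evol_self, one_apply_eq_self])
      (hstable n x) (hg0 n))
    (fun n x => weightedSup_bounds Set.self_mem_Iic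
      (by rw [div_self (hk0 n).ne', one_mul, comp_apply, hB.apply_self])
      (hunstable n x) (hg0 n))

theorem stmt_12 [CompleteSpace X] (A P : ℕ → X →L[ℝ] X) (B : ℕ → ℕ → X →L[ℝ] X)
    (hP : ProjSeq P) (hSI : StronglyInvariantFor A P) (hB : SkewEvol A P B)
    (h k : ℕ → ℝ) (hh : IsGrowthRate h) (hk : IsGrowthRate k)
    (hG : HasGrowth A P h k) :
    NormsCompatible (fun n x =>
      sSup ((fun m => (h n / h m) * ‖evol A m n (P n x)‖) '' Set.Ici n) +
      sSup ((fun p => (k p / k n) * ‖B n p ((1 - P n) x)‖) '' Set.Iic n)) P :=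
  stmt_12_general A P B hB h k hh hk hG

end
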